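/- Consider F(ξ₁,ξ₂) = (1/π)[log((1-ξ₁²)(1-ξ₂²))] - (2/π) log((1 - ξ₁ξ₂ + √((1-ξ₁²)(1-ξ₂²)))/(ξ₂-ξ₁)) on the domain {(ξ₁,ξ₂) : -1 < ξ₁ < ξ₂ < 1}. Then (ξ₁,ξ₂) = (-1/√3, 1/√3) is a critical point of F. -/

import Mathlib

/-!
`F` is invariant under the reflection `(ξ₁, ξ₂) ↦ (-ξ₂, -ξ₁)`, which fixes `p₀ = (-a, a)`,
`a = 1/√3`, and acts as `-1` on the direction `(1, 1)`; so `DF(p₀)` kills `(1, 1)`.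
On the antidiagonal the square root is `1 - t²` and `F(-t, t) = (2/π) log (t - t³)`, whose
derivative `(2/π) (1 - 3t²)/(t - t³)` vanishes at `t = a`; so `DF(p₀)` kills `(-1, 1)` as well.
-/

open Real

noncomputable def redF2 (p : ℝ × ℝ) : ℝ :=
  (1 / π) * Real.log ((1 - p.1 ^ 2) * (1 - p.2 ^ 2)) -
    (2 / π) * Real.log ((1 - p.1 * p.2 + Real.sqrt ((1 - p.1 ^ 2) * (1 - p.2 ^ 2))) / (p.2 - p.1))

theorem ContinuousLinearMap.eq_zero_of_apply_one_one {E : Type*} [NormedAddCommGroup E]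
    [NormedSpace ℝ E] (L : ℝ × ℝ →L[ℝ] E) (h₁ : L (1, 1) = 0) (h₂ : L (-1, 1) = 0) : L = 0 := by
  refine ContinuousLinearMap.ext fun v => ?_
  have hv : v = ((v.1 + v.2) / 2) • ((1 : ℝ), (1 : ℝ)) +
      ((v.2 - v.1) / 2) • ((-1 : ℝ), (1 : ℝ)) := by
    ext <;> simp <;> ring
  rw [hv, map_add, map_smul, map_smul, h₁, h₂, smul_zero, smul_zero, add_zero, zero_apply]

theorem HasFDerivAt.apply_one_one_eq_zero_of_neg_swap {f : ℝ × ℝ → ℝ} {D : ℝ × ℝ →L[ℝ] ℝ}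
    {a : ℝ} (hf : ∀ p : ℝ × ℝ, f (-p.2, -p.1) = f p) (hD : HasFDerivAt f D (-a, a)) :
    D (1, 1) = 0 := by
  let σ : ℝ × ℝ →L[ℝ] ℝ × ℝ :=
    (-ContinuousLinearMap.snd ℝ ℝ ℝ).prod (-ContinuousLinearMap.fst ℝ ℝ ℝ)
  have hσ : HasFDerivAt (f ∘ σ) (D.comp σ) (-a, a) := by
    refine HasFDerivAt.comp _ ?_ σ.hasFDerivAt
    simpa [σ] using hD
  have hcomp : D.comp σ = D := ((funext hf : f ∘ σ = f) ▸ hσ).unique hD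
  have hσ₁₁ : σ (1, 1) = -(1, 1) := by simp [σ]
  have h := congrArg (fun L : ℝ × ℝ →L[ℝ] ℝ => L (1, 1)) hcomp
  rwa [ContinuousLinearMap.comp_apply, hσ₁₁, map_neg, neg_eq_self] at h

theorem redF2_neg_swap (p : ℝ × ℝ) : redF2 (-p.2, -p.1) = redF2 p := by
  simp only [redF2]
  ring_nf

theorem differentiableAt_redF2 {p : ℝ × ℝ} (h1 : -1 < p.1) (h12 : p.1 < p.2) (h2 : p.2 < 1) :
    DifferentiableAt ℝ redF2 p := by
  obtain ⟨x, y⟩ := p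
  dsimp only at h1 h12 h2
  have hprod : 0 < (1 - x ^ 2) * (1 - y ^ 2) := mul_pos (by nlinarith) (by nlinarith)
  have hnum : 0 < 1 - x * y + √((1 - x ^ 2) * (1 - y ^ 2)) := by
    have := Real.sqrt_nonneg ((1 - x ^ 2) * (1 - y ^ 2))
    nlinarith
  have hquot : (1 - x * y + √((1 - x ^ 2) * (1 - y ^ 2))) / (y - x) ≠ 0 :=
    (div_pos hnum (sub_pos.2 h12)).ne'
  unfold redF2
  fun_prop (disch := first | exact hprod.ne' | exact (sub_pos.2 h12).ne' | exact hquot)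

theorem redF2_neg_self {t : ℝ} (ht0 : 0 < t) (ht1 : t < 1) :
    redF2 (-t, t) = 2 / π * Real.log (t - t ^ 3) := by
  have hu : 0 < 1 - t ^ 2 := by nlinarith
  have hquot : (1 - -t * t + (1 - t ^ 2)) / (t - -t) = t⁻¹ := by
    field_simp
    ring
  have hfac : t - t ^ 3 = t * (1 - t ^ 2) := by ring
  unfold redF2
  dsimp only
  rw [neg_sq, Real.sqrt_mul_self hu.le, hquot, Real.log_inv, Real.log_mul hu.ne' hu.ne', hfac,
    Real.log_mul ht0.ne' hu.ne']
  ring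

theorem hasDerivAt_redF2_neg_self {t : ℝ} (ht0 : 0 < t) (ht1 : t < 1) :
    HasDerivAt (fun s => redF2 (-s, s)) (2 / π * ((1 - 3 * t ^ 2) / (t - t ^ 3))) t := by
  have hpos : 0 < t - t ^ 3 := by
    have := mul_pos ht0 (show 0 < 1 - t ^ 2 by nlinarith)
    linarith
  have hlog := (((hasDerivAt_id t).sub (hasDerivAt_pow 3 t)).log hpos.ne').const_mul (2 / π)
  refine (hlog.congr_of_eventuallyEq ?_).congr_deriv ?_
  · filter_upwards [Ioo_mem_nhds ht0 ht1] with s hs using redF2_neg_self hs.1 hs.2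
  · norm_num

theorem redF2_critical_point :
    HasFDerivAt redF2 (0 : ℝ × ℝ →L[ℝ] ℝ) (-(1 / Real.sqrt 3), 1 / Real.sqrt 3) := by
  set a := 1 / Real.sqrt 3
  have ha0 : 0 < a := by positivity
  have ha2 : a ^ 2 = 1 / 3 := by rw [div_pow, one_pow, Real.sq_sqrt (by norm_num)]
  have ha1 : a < 1 := by nlinarith
  have hF := (differentiableAt_redF2 (p := (-a, a)) (by linarith) (by linarith)
    ha1).hasFDerivAt
  set D := fderiv ℝ redF2 (-a, a)
  have hdiag : D (1, 1) = 0 := hF.apply_one_one_eq_zero_of_neg_swap redF2_neg_swap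
  have hanti : D (-1, 1) = 0 := by
    have hcomp := hF.comp_hasDerivAt (f := fun s : ℝ => (-s, s)) a
      ((hasDerivAt_id' a).neg.prodMk (hasDerivAt_id' a))
    have := hcomp.unique (hasDerivAt_redF2_neg_self ha0 ha1)
    simpa [ha2] using this
  rwa [D.eq_zero_of_apply_one_one hdiag hanti] at hF
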